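/- arXiv:2412.17543 — 4 statements merged into one kernel-verified Lean document; each statement's English description precedes it below -/
import Mathlib

section
/- Let v ∈ ℝⁿ satisfy Wᵀ A v = 0. Then for every j ≥ 1, the Krylov subspace K_j(QAQ, v) = span{v, (QAQ)v, …, (QAQ)^{j−1} v} intersects the column space of W trivially: if a vector lies both in K_j(QAQ, v) and in range(W), it is the zero vector. -/
open Matrix

/-- The deflation projector `Q = I - W (WᵀAW)⁻¹ Wᵀ A` used in deflated PCG. -/
noncomputable def deflationProj {n k : ℕ} (A : Matrix (Fin n) (Fin n) ℝ)
    (W : Matrix (Fin n) (Fin k) ℝ) : Matrix (Fin n) (Fin n) ℝ :=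
  1 - W * (Wᵀ * A * W)⁻¹ * Wᵀ * A

/-- The `j`-th Krylov subspace `K_j(B, v) = span {v, B v, …, B^(j-1) v}`. -/
noncomputable def krylov {n : ℕ} (B : Matrix (Fin n) (Fin n) ℝ) (v : Fin n → ℝ) (j : ℕ) :
    Submodule ℝ (Fin n → ℝ) :=
  Submodule.span ℝ (Set.range fun i : Fin j => (B ^ (i : ℕ)) *ᵥ v)

/-!
Since `E = WᵀAW` is invertible, `WᵀA Q = 0`, hence `WᵀA (QAQ) = 0`. Together with
`WᵀA v = 0` this puts every `(QAQ)^i v`, and so all of `K_j(QAQ, v)`, in the kernel of `WᵀA`.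
A vector `W c` in that kernel satisfies `E c = 0`, so `c = 0`.
-/

theorem transpose_mul_mul_deflationProj_eq_zero {n k : ℕ} {A : Matrix (Fin n) (Fin n) ℝ}
    {W : Matrix (Fin n) (Fin k) ℝ} (hE : IsUnit (Wᵀ * A * W)) :
    Wᵀ * A * deflationProj A W = 0 := by
  have hEinv : Wᵀ * A * W * (Wᵀ * A * W)⁻¹ = 1 :=
    mul_nonsing_inv _ ((isUnit_iff_isUnit_det _).mp hE)
  calc Wᵀ * A * deflationProj A W
      = Wᵀ * A - (Wᵀ * A * W * (Wᵀ * A * W)⁻¹) * (Wᵀ * A) := by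
        simp only [deflationProj, Matrix.mul_sub, Matrix.mul_one, Matrix.mul_assoc]
    _ = 0 := by rw [hEinv, Matrix.one_mul, sub_self]

theorem krylov_le_ker_mulVecLin {m : Type*} [Fintype m] {n : ℕ} {M : Matrix m (Fin n) ℝ}
    {B : Matrix (Fin n) (Fin n) ℝ} {v : Fin n → ℝ} (hMB : M * B = 0) (hMv : M *ᵥ v = 0)
    (j : ℕ) : krylov B v j ≤ LinearMap.ker M.mulVecLin := by
  refine Submodule.span_le.mpr ?_
  rintro _ ⟨⟨i, _⟩, rfl⟩
  cases i with
  | zero => simpa using hMv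
  | succ i => simp [mulVec_mulVec, pow_succ', ← Matrix.mul_assoc, hMB]

/-- If `Wᵀ A v = 0`, then for every `j ≥ 1` the Krylov subspace
`K_j(QAQ, v)` intersects the column space of `W` trivially. -/
theorem krylov_inter_deflation_trivial {n k : ℕ}
    (A : Matrix (Fin n) (Fin n) ℝ) (hA : A.PosDef)
    (W : Matrix (Fin n) (Fin k) ℝ)
    (hW : LinearIndependent ℝ (fun j : Fin k => Wᵀ j))
    (v : Fin n → ℝ) (hv : Wᵀ *ᵥ (A *ᵥ v) = 0) :
    ∀ j : ℕ, 1 ≤ j → ∀ y : Fin n → ℝ,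
      y ∈ krylov (deflationProj A W * A * deflationProj A W) v j →
      (∃ c : Fin k → ℝ, y = W *ᵥ c) → y = 0 := by
  rintro j - _ hy ⟨c, rfl⟩
  have hE : IsUnit (Wᵀ * A * W) := by
    simpa using (hA.conjTranspose_mul_mul_same (mulVec_injective_iff.mpr hW)).isUnit
  have hQ := transpose_mul_mul_deflationProj_eq_zero hE
  have hKer := krylov_le_ker_mulVecLin (M := Wᵀ * A)
    (by rw [← Matrix.mul_assoc, ← Matrix.mul_assoc, hQ, Matrix.zero_mul, Matrix.zero_mul])
    (by rwa [← mulVec_mulVec]) j hy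
  have hEc : (Wᵀ * A * W) *ᵥ c = 0 := by
    simpa only [LinearMap.mem_ker, mulVecLin_apply, mulVec_mulVec] using hKer
  rw [mulVec_injective_of_isUnit hE (hEc.trans (mulVec_zero _).symm), mulVec_zero]
end

section
/- Consider sequences (r_j), (p_j), (z_j) in ℝⁿ and scalars (α_j), (β_j) in ℝ such that Wᵀ r₀ = 0, p₀ = z₀ − W (WᵀAW)⁻¹ Wᵀ A z₀, and for all j ≥ 1: r_j = r_{j−1} − α_{j−1} A p_{j−1} and p_j = z_j + β_{j−1} p_{j−1} − W (WᵀAW)⁻¹ Wᵀ A z_j. Then for all j ≥ 0, Wᵀ r_j = 0 and Wᵀ A p_j = 0; i.e., all residuals of deflated PCG remain orthogonal to the deflation basis and all search directions remain A-orthogonal to it, regardless of the choice of the coefficients α_j, β_j and of the vectors z_j. -/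
open Matrix

variable {R n m : Type*} [Fintype n] [Fintype m]

theorem isUnit_det_transpose_mul_mul_of_linearIndependent [DecidableEq m]
    {A : Matrix n n ℝ} (hA : A.PosDef) {W : Matrix n m ℝ} (hW : LinearIndependent ℝ W.col) :
    IsUnit (Wᵀ * A * W).det := by
  have hE : (Wᴴ * A * W).PosDef := hA.conjTranspose_mul_mul_same (mulVec_injective_iff.mpr hW)
  rw [conjTranspose_eq_transpose_of_trivial] at hE
  exact (isUnit_iff_isUnit_det _).mp hE.isUnit

theorem transpose_mulVec_mulVec_sub_deflation_eq_zero [CommRing R] [DecidableEq m]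
    {A : Matrix n n R} {W : Matrix n m R} (hE : IsUnit (Wᵀ * A * W).det) (x : n → R) :
    Wᵀ *ᵥ (A *ᵥ (x - W *ᵥ ((Wᵀ * A * W)⁻¹ *ᵥ (Wᵀ *ᵥ (A *ᵥ x))))) = 0 := by
  have hcancel : Wᵀ *ᵥ (A *ᵥ (W *ᵥ ((Wᵀ * A * W)⁻¹ *ᵥ (Wᵀ *ᵥ (A *ᵥ x))))) =
      Wᵀ *ᵥ (A *ᵥ x) := by
    simp only [mulVec_mulVec, ← Matrix.mul_assoc, mul_nonsing_inv _ hE, Matrix.one_mul]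
  rw [mulVec_sub, mulVec_sub, hcancel, sub_self]

/-- In deflated PCG, given `Wᵀ r₀ = 0`,
`p₀ = z₀ − W (WᵀAW)⁻¹ Wᵀ A z₀`, and the recurrences
`r_j = r_{j−1} − α_{j−1} A p_{j−1}` and `p_j = z_j + β_{j−1} p_{j−1} − W (WᵀAW)⁻¹ Wᵀ A z_j`
for all `j ≥ 1`, all residuals remain orthogonal to the deflation basis and all search
directions remain `A`-orthogonal to it: `Wᵀ r_j = 0` and `Wᵀ A p_j = 0` for all `j ≥ 0`,
regardless of the choices of `α_j`, `β_j`, and `z_j`. -/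
theorem deflatedPCG_orthogonality_invariant {n k : ℕ}
    (A : Matrix (Fin n) (Fin n) ℝ) (hA : A.PosDef)
    (W : Matrix (Fin n) (Fin k) ℝ)
    (hW : LinearIndependent ℝ (fun j : Fin k => Wᵀ j))
    (r p z : ℕ → Fin n → ℝ) (α β : ℕ → ℝ)
    (hr0 : Wᵀ *ᵥ r 0 = 0)
    (hp0 : p 0 = z 0 - W *ᵥ ((Wᵀ * A * W)⁻¹ *ᵥ (Wᵀ *ᵥ (A *ᵥ z 0))))
    (hr : ∀ j : ℕ, r (j + 1) = r j - α j • (A *ᵥ p j))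
    (hp : ∀ j : ℕ, p (j + 1) =
      z (j + 1) + β j • p j - W *ᵥ ((Wᵀ * A * W)⁻¹ *ᵥ (Wᵀ *ᵥ (A *ᵥ z (j + 1))))) :
    ∀ j : ℕ, Wᵀ *ᵥ r j = 0 ∧ Wᵀ *ᵥ (A *ᵥ p j) = 0 := by
  have hdeflate := transpose_mulVec_mulVec_sub_deflation_eq_zero
    (isUnit_det_transpose_mul_mul_of_linearIndependent hA hW)
  intro j
  induction j with
  | zero => exact ⟨hr0, hp0 ▸ hdeflate (z 0)⟩
  | succ j ih =>
    obtain ⟨hrj, hpj⟩ := ih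
    constructor
    · rw [hr j, mulVec_sub, mulVec_smul, hrj, hpj, smul_zero, sub_zero]
    · rw [hp j, add_sub_right_comm, mulVec_add, mulVec_add, hdeflate, mulVec_smul,
        mulVec_smul, hpj, smul_zero, add_zero]
end

section
/- Suppose A is an n×n real symmetric positive definite matrix, the columns of W are orthonormal eigenvectors of A (WᵀW = I_k, A W = W D with D diagonal invertible), and suppose μ ≥ 0 is such that uᵀ A u ≤ μ uᵀ u for every u ∈ ℝⁿ with Wᵀ u = 0. Then the deflated operator satisfies xᵀ (Q A Q) x ≤ μ xᵀ x for every x ∈ ℝⁿ, where Q = I − W (WᵀAW)⁻¹ Wᵀ A; i.e., deflating the eigenvectors corresponding to the largest eigenvalues reduces the upper bound of the spectrum of the operator seen by the Krylov method. -/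
open Matrix

/-- If the columns of `W` are orthonormal eigenvectors of the symmetric
positive definite matrix `A`, and `uᵀ A u ≤ μ uᵀ u` for every `u` with `Wᵀ u = 0`, then the
deflated operator satisfies `xᵀ (Q A Q) x ≤ μ xᵀ x` for every `x ∈ ℝⁿ`: deflating the
eigenvectors corresponding to the largest eigenvalues reduces the upper bound of the
spectrum of the operator seen by the Krylov method. -/
theorem deflated_operator_spectrum_bound {n k : ℕ}
    (A : Matrix (Fin n) (Fin n) ℝ) (hA : A.PosDef)
    (W : Matrix (Fin n) (Fin k) ℝ) (D : Matrix (Fin k) (Fin k) ℝ)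
    (hWW : Wᵀ * W = 1) (hAW : A * W = W * D) (hD : D.IsDiag) (hDinv : IsUnit D)
    (μ : ℝ) (hμ : 0 ≤ μ)
    (hbound : ∀ u : Fin n → ℝ, Wᵀ *ᵥ u = 0 → u ⬝ᵥ (A *ᵥ u) ≤ μ * (u ⬝ᵥ u)) :
    ∀ x : Fin n → ℝ,
      x ⬝ᵥ ((deflationProj A W * A * deflationProj A W) *ᵥ x) ≤ μ * (x ⬝ᵥ x) := by
  have hAT : Aᵀ = A := by
    have := hA.isHermitian.eq
    simpa using this
  have hDT : Dᵀ = D := hD.isSymm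
  have hWA : Wᵀ * A = D * Wᵀ := by
    have h := congrArg Matrix.transpose hAW
    rw [Matrix.transpose_mul, Matrix.transpose_mul, hAT, hDT] at h
    exact h
  have hWAW : Wᵀ * A * W = D := by
    rw [Matrix.mul_assoc, hAW, ← Matrix.mul_assoc, hWW, Matrix.one_mul]
  have hDdet : IsUnit D.det := (Matrix.isUnit_iff_isUnit_det D).mp hDinv
  have hQ : deflationProj A W = 1 - W * Wᵀ := by
    unfold deflationProj
    rw [hWAW]
    have h : W * D⁻¹ * Wᵀ * A = W * Wᵀ := by
      rw [Matrix.mul_assoc (W * D⁻¹) Wᵀ A, hWA, ← Matrix.mul_assoc (W * D⁻¹) D Wᵀ,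
        Matrix.mul_assoc W D⁻¹ D, Matrix.nonsing_inv_mul D hDdet, Matrix.mul_one]
    rw [h]
  set P : Matrix (Fin n) (Fin n) ℝ := 1 - W * Wᵀ with hP
  have hMM : (W * Wᵀ) * (W * Wᵀ) = W * Wᵀ := by
    rw [Matrix.mul_assoc W Wᵀ (W * Wᵀ), ← Matrix.mul_assoc Wᵀ W Wᵀ, hWW, Matrix.one_mul]
  have hPT : Pᵀ = P := by
    rw [hP]
    simp [Matrix.transpose_sub, Matrix.transpose_mul]
  have hPP : P * P = P := by
    rw [hP, Matrix.mul_sub, Matrix.sub_mul, Matrix.sub_mul, Matrix.one_mul,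
      Matrix.mul_one, hMM, Matrix.one_mul, sub_self, sub_zero]
  have hWP : Wᵀ * P = 0 := by
    rw [hP, Matrix.mul_sub, Matrix.mul_one, ← Matrix.mul_assoc, hWW, Matrix.one_mul,
      sub_self]
  intro x
  set u : Fin n → ℝ := P *ᵥ x with hu
  have hu0 : Wᵀ *ᵥ u = 0 := by
    rw [hu, Matrix.mulVec_mulVec, hWP, Matrix.zero_mulVec]
  have hvec : x ᵥ* P = u := by
    rw [← hPT, Matrix.vecMul_transpose]
  have key : x ⬝ᵥ ((P * A * P) *ᵥ x) = u ⬝ᵥ (A *ᵥ u) := by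
    rw [← Matrix.mulVec_mulVec, Matrix.dotProduct_mulVec, ← Matrix.vecMul_vecMul,
      hvec, ← Matrix.dotProduct_mulVec]
  have h1 : x ⬝ᵥ (P *ᵥ x) = u ⬝ᵥ u := by
    conv_lhs => rw [← hPP, ← Matrix.mulVec_mulVec, Matrix.dotProduct_mulVec, hvec]
  have hPx : P *ᵥ x = x - W *ᵥ (Wᵀ *ᵥ x) := by
    rw [hP, Matrix.sub_mulVec, Matrix.one_mulVec, ← Matrix.mulVec_mulVec]
  have h2 : x ⬝ᵥ x - x ⬝ᵥ (P *ᵥ x) = (Wᵀ *ᵥ x) ⬝ᵥ (Wᵀ *ᵥ x) := by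
    rw [hPx, dotProduct_sub, Matrix.dotProduct_mulVec, ← Matrix.mulVec_transpose]
    ring
  have hnn : 0 ≤ (Wᵀ *ᵥ x) ⬝ᵥ (Wᵀ *ᵥ x) :=
    Finset.sum_nonneg fun i _ => mul_self_nonneg _
  have huu : u ⬝ᵥ u ≤ x ⬝ᵥ x := by linarith [h1, h2, hnn]
  calc x ⬝ᵥ ((deflationProj A W * A * deflationProj A W) *ᵥ x)
      = u ⬝ᵥ (A *ᵥ u) := by rw [hQ]; exact key
    _ ≤ μ * (u ⬝ᵥ u) := hbound u hu0
    _ ≤ μ * (x ⬝ᵥ x) := mul_le_mul_of_nonneg_left huu hμ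
end

section
/- The matrix S := A − A W (WᵀAW)⁻¹ Wᵀ A (equal to A Q) is symmetric positive semidefinite, and its kernel is exactly the column space of W: S x = 0 if and only if x = W c for some c ∈ ℝᵏ. -/
open Matrix

/-!
With `E = Wᴴ A W` and the deflation projector `Q = 1 - W E⁻¹ Wᴴ A`, one has `Q W = 0` and
`Wᴴ A Q = 0`. The second identity gives `A Q = Qᴴ A Q`, so `S = A Q` is a congruence of `A`,
hence positive semidefinite, and `S x = 0` iff `Q x = 0`, because `A` is positive definite.
Finally `Q x = 0` says `x = W (E⁻¹ Wᴴ A x)`, while `Q W = 0` puts every `W c` in the kernel.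
-/

namespace Matrix

section Deflation

variable {n m R : Type*} [Fintype n] [Fintype m] [DecidableEq n] [DecidableEq m]
  [CommRing R] [StarRing R] {A : Matrix n n R} {W : Matrix n m R}

noncomputable def deflation (A : Matrix n n R) (W : Matrix n m R) : Matrix n n R :=
  1 - W * (Wᴴ * A * W)⁻¹ * Wᴴ * A

theorem sub_mul_inv_mul_eq_mul_deflation :
    A - A * W * (Wᴴ * A * W)⁻¹ * Wᴴ * A = A * deflation A W := by
  simp only [deflation, Matrix.mul_sub, Matrix.mul_one, Matrix.mul_assoc]

theorem deflation_mul_eq_zero (hE : IsUnit (Wᴴ * A * W)) : deflation A W * W = 0 := by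
  have hinv : (Wᴴ * A * W)⁻¹ * (Wᴴ * A * W) = 1 :=
    nonsing_inv_mul _ ((isUnit_iff_isUnit_det _).mp hE)
  calc deflation A W * W = W - W * ((Wᴴ * A * W)⁻¹ * (Wᴴ * A * W)) := by
        simp only [deflation, Matrix.sub_mul, Matrix.one_mul, Matrix.mul_assoc]
    _ = 0 := by rw [hinv, Matrix.mul_one, sub_self]

theorem conjTranspose_mul_mul_deflation (hE : IsUnit (Wᴴ * A * W)) :
    Wᴴ * A * deflation A W = 0 := by
  have hinv : (Wᴴ * A * W) * (Wᴴ * A * W)⁻¹ = 1 :=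
    mul_nonsing_inv _ ((isUnit_iff_isUnit_det _).mp hE)
  calc Wᴴ * A * deflation A W = Wᴴ * A - (Wᴴ * A * W) * (Wᴴ * A * W)⁻¹ * (Wᴴ * A) := by
        simp only [deflation, Matrix.mul_sub, Matrix.mul_one, Matrix.mul_assoc]
    _ = 0 := by rw [hinv, Matrix.one_mul, sub_self]

theorem conjTranspose_deflation (hA : A.IsHermitian) :
    (deflation A W)ᴴ = 1 - A * W * (Wᴴ * A * W)⁻¹ * Wᴴ := by
  have hE : (Wᴴ * A * W)⁻¹ᴴ = (Wᴴ * A * W)⁻¹ := (isHermitian_conjTranspose_mul_mul W hA).inv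
  simp only [deflation, conjTranspose_sub, conjTranspose_one, conjTranspose_mul,
    conjTranspose_conjTranspose, hA.eq, hE]
  simp only [Matrix.mul_assoc]

theorem conjTranspose_deflation_mul_mul_deflation (hA : A.IsHermitian)
    (hE : IsUnit (Wᴴ * A * W)) :
    (deflation A W)ᴴ * A * deflation A W = A * deflation A W := by
  calc (deflation A W)ᴴ * A * deflation A W
        = A * deflation A W - A * W * (Wᴴ * A * W)⁻¹ * (Wᴴ * A * deflation A W) := by
        simp only [conjTranspose_deflation hA, Matrix.sub_mul, Matrix.one_mul, Matrix.mul_assoc]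
    _ = A * deflation A W := by
        rw [conjTranspose_mul_mul_deflation hE, Matrix.mul_zero, sub_zero]

theorem deflation_mulVec_eq_zero_iff (hE : IsUnit (Wᴴ * A * W)) (x : n → R) :
    deflation A W *ᵥ x = 0 ↔ ∃ c, x = W *ᵥ c := by
  constructor
  · intro hx
    refine ⟨((Wᴴ * A * W)⁻¹ * Wᴴ * A) *ᵥ x, ?_⟩
    rw [deflation, sub_mulVec, one_mulVec, sub_eq_zero] at hx
    simpa only [mulVec_mulVec, Matrix.mul_assoc] using hx
  · rintro ⟨c, rfl⟩
    rw [mulVec_mulVec, deflation_mul_eq_zero hE, zero_mulVec]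

end Deflation

section PosDef

open scoped ComplexOrder

variable {n m 𝕜 : Type*} [Fintype n] [Fintype m] [RCLike 𝕜] {A : Matrix n n 𝕜}

theorem PosDef.conjTranspose_mul_mul_same_mulVec_eq_zero_iff (hA : A.PosDef)
    (B : Matrix n m 𝕜) (x : m → 𝕜) : (Bᴴ * A * B) *ᵥ x = 0 ↔ B *ᵥ x = 0 := by
  rw [← (hA.posSemidef.conjTranspose_mul_mul_same B).dotProduct_mulVec_zero_iff,
    ← mulVec_mulVec, ← mulVec_mulVec, dotProduct_mulVec, ← star_mulVec]
  refine ⟨fun h => ?_, fun h => by rw [h, star_zero, zero_dotProduct]⟩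
  by_contra hBx
  exact (hA.dotProduct_mulVec_pos hBx).ne' h

variable [DecidableEq n] [DecidableEq m] {W : Matrix n m 𝕜}

theorem PosDef.posSemidef_sub_mul_inv_mul (hA : A.PosDef) (hW : Function.Injective W.mulVec) :
    (A - A * W * (Wᴴ * A * W)⁻¹ * Wᴴ * A).PosSemidef := by
  rw [sub_mul_inv_mul_eq_mul_deflation, ← conjTranspose_deflation_mul_mul_deflation hA.isHermitian
    (hA.conjTranspose_mul_mul_same hW).isUnit]
  exact hA.posSemidef.conjTranspose_mul_mul_same _

theorem PosDef.sub_mul_inv_mul_mulVec_eq_zero_iff (hA : A.PosDef)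
    (hW : Function.Injective W.mulVec) (x : n → 𝕜) :
    (A - A * W * (Wᴴ * A * W)⁻¹ * Wᴴ * A) *ᵥ x = 0 ↔ ∃ c, x = W *ᵥ c := by
  have hE := (hA.conjTranspose_mul_mul_same hW).isUnit
  rw [sub_mul_inv_mul_eq_mul_deflation,
    ← conjTranspose_deflation_mul_mul_deflation hA.isHermitian hE,
    hA.conjTranspose_mul_mul_same_mulVec_eq_zero_iff, deflation_mulVec_eq_zero_iff hE]

end PosDef

end Matrix

/-- The matrix `S := A − A W (WᵀAW)⁻¹ Wᵀ A` (equal to `A Q`) is symmetric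
positive semidefinite, and its kernel is exactly the column space of `W`:
`S x = 0` iff `x = W c` for some `c ∈ ℝᵏ`. -/
theorem deflated_matrix_posSemidef_kernel {n k : ℕ}
    (A : Matrix (Fin n) (Fin n) ℝ) (hA : A.PosDef)
    (W : Matrix (Fin n) (Fin k) ℝ)
    (hW : LinearIndependent ℝ (fun j : Fin k => Wᵀ j)) :
    (A - A * W * (Wᵀ * A * W)⁻¹ * Wᵀ * A).PosSemidef ∧
      ∀ x : Fin n → ℝ,
        (A - A * W * (Wᵀ * A * W)⁻¹ * Wᵀ * A) *ᵥ x = 0 ↔ ∃ c : Fin k → ℝ, x = W *ᵥ c := by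
  have hWinj : Function.Injective W.mulVec := mulVec_injective_iff.mpr hW
  rw [← conjTranspose_eq_transpose_of_trivial]
  exact ⟨hA.posSemidef_sub_mul_inv_mul hWinj, hA.sub_mul_inv_mul_mulVec_eq_zero_iff hWinj⟩
end
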